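/- arXiv:1901.01099 — 3 statements merged into one kernel-verified Lean document; each statement's English description precedes it below -/
import Mathlib

section
/- For every natural number n ≥ 2, every λ ∈ [−1,1] and every x ∈ [0,1], B_{n,λ}(t;x) = x + λ(1 − 2x + x^{n+1} − (1−x)^{n+1})/(n(n−1)), where B_{n,λ}(t;x) denotes the operator applied to the function t ↦ t. -/
open Finset Filter

/-- Bernstein basis polynomial `b_{n,i}(x) = C(n,i) x^i (1-x)^(n-i)`. -/
noncomputable def bern (n i : ℕ) (x : ℝ) : ℝ :=
  (n.choose i : ℝ) * x ^ i * (1 - x) ^ (n - i)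

/-- Bézier basis `b̃_{n,i}(λ; x)` with shape parameter `lam`. -/
noncomputable def bez (n : ℕ) (lam x : ℝ) (i : ℕ) : ℝ :=
  if i = 0 then bern n 0 x - lam / ((n : ℝ) + 1) * bern (n + 1) 1 x
  else if i = n then bern n n x - lam / ((n : ℝ) + 1) * bern (n + 1) n x
  else bern n i x + lam * (((n : ℝ) - 2 * (i : ℝ) + 1) / ((n : ℝ) ^ 2 - 1) * bern (n + 1) i x
    - ((n : ℝ) - 2 * (i : ℝ) - 1) / ((n : ℝ) ^ 2 - 1) * bern (n + 1) (i + 1) x)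

/-- The λ-Bernstein operator `B_{n,λ}(f; x) = ∑_{i=0}^n f(i/n) b̃_{n,i}(λ; x)`. -/
noncomputable def lB (n : ℕ) (lam : ℝ) (f : ℝ → ℝ) (x : ℝ) : ℝ :=
  ∑ i ∈ Finset.range (n + 1), f ((i : ℝ) / (n : ℝ)) * bez n lam x i

lemma bern_eval (m i : ℕ) (x : ℝ) : bern m i x = (bernsteinPolynomial ℝ m i).eval x := by
  simp [bern, bernsteinPolynomial]

lemma bern_sum0 (m : ℕ) (x : ℝ) : ∑ i ∈ Finset.range (m + 1), bern m i x = 1 := by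
  have := congrArg (Polynomial.eval x) (bernsteinPolynomial.sum ℝ m)
  simpa [bern_eval, Polynomial.eval_finset_sum] using this

lemma bern_sum1 (m : ℕ) (x : ℝ) :
    ∑ i ∈ Finset.range (m + 1), (i : ℝ) * bern m i x = (m : ℝ) * x := by
  have := congrArg (Polynomial.eval x) (bernsteinPolynomial.sum_smul ℝ m)
  simpa [bern_eval, Polynomial.eval_finset_sum, nsmul_eq_mul] using this

lemma tele (f : ℕ → ℝ) (m : ℕ) :
    ∑ i ∈ Finset.range (m + 1), (i : ℝ) * (f i - f (i + 1)) =
      ∑ i ∈ Finset.range (m + 2), f i - ((m : ℝ) + 1) * f (m + 1) - f 0 := by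
  induction m with
  | zero => simp [Finset.sum_range_succ]
  | succ k ih =>
      rw [Finset.sum_range_succ, ih, Finset.sum_range_succ (n := k + 2)]
      push_cast
      ring

/-- first moment of the λ-Bernstein operator. -/
theorem lB_first_moment (n : ℕ) (hn : 2 ≤ n) (lam : ℝ)
    (hlam : lam ∈ Set.Icc (-1 : ℝ) 1) (x : ℝ) (hx : x ∈ Set.Icc (0 : ℝ) 1) :
    lB n lam (fun t => t) x =
      x + lam * (1 - 2 * x + x ^ (n + 1) - (1 - x) ^ (n + 1)) / ((n : ℝ) * ((n : ℝ) - 1)) := by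
  have hn0 : (n : ℝ) ≠ 0 := by positivity
  have hn2 : (2 : ℝ) ≤ (n : ℝ) := by exact_mod_cast hn
  have hn1 : (n : ℝ) - 1 ≠ 0 := by nlinarith
  have hn1' : (n : ℝ) + 1 ≠ 0 := by nlinarith
  have hsq : (n : ℝ) ^ 2 - 1 ≠ 0 := by nlinarith
  set f : ℕ → ℝ := fun j => ((n : ℝ) - 2 * j + 1) * bern (n + 1) j x with hf
  have hbtop : bern (n + 1) (n + 1) x = x ^ (n + 1) := by simp [bern]
  have hbzero : bern (n + 1) 0 x = (1 - x) ^ (n + 1) := by simp [bern]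
  have key : ∀ i ∈ Finset.range (n + 1),
      ((i : ℝ) / (n : ℝ)) * bez n lam x i =
        (i : ℝ) / (n : ℝ) * bern n i x
          + lam / ((n : ℝ) * ((n : ℝ) ^ 2 - 1)) * ((i : ℝ) * (f i - f (i + 1)))
          - (if i = n then lam * x ^ (n + 1) / ((n : ℝ) - 1) else 0) := by
    intro i hi
    rcases eq_or_ne i 0 with rfl | hi0
    · have : (0 : ℕ) ≠ n := by omega
      simp [bez, this]
    rcases eq_or_ne i n with rfl | hin
    · have hii : i ≠ 0 := hi0
      simp only [bez, if_neg hi0, if_pos rfl, if_pos rfl, hf, hbtop]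
      push_cast
      field_simp
      ring
    · simp only [bez, if_neg hi0, if_neg hin, if_neg hin, hf]
      push_cast
      field_simp
      ring
  have hlB : lB n lam (fun t => t) x =
      ∑ i ∈ Finset.range (n + 1), ((i : ℝ) / (n : ℝ) * bern n i x
        + lam / ((n : ℝ) * ((n : ℝ) ^ 2 - 1)) * ((i : ℝ) * (f i - f (i + 1)))
        - (if i = n then lam * x ^ (n + 1) / ((n : ℝ) - 1) else 0)) := by
    exact Finset.sum_congr rfl key
  rw [hlB, Finset.sum_sub_distrib, Finset.sum_add_distrib]
  have h1 : ∑ i ∈ Finset.range (n + 1), (i : ℝ) / (n : ℝ) * bern n i x = x := by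
    have : ∑ i ∈ Finset.range (n + 1), (i : ℝ) / (n : ℝ) * bern n i x
        = (1 / (n : ℝ)) * ∑ i ∈ Finset.range (n + 1), (i : ℝ) * bern n i x := by
      rw [Finset.mul_sum]; exact Finset.sum_congr rfl fun i _ => by ring
    rw [this, bern_sum1]; field_simp
  have h2 : ∑ i ∈ Finset.range (n + 1),
      lam / ((n : ℝ) * ((n : ℝ) ^ 2 - 1)) * ((i : ℝ) * (f i - f (i + 1)))
      = lam / ((n : ℝ) * ((n : ℝ) ^ 2 - 1)) *
        ((((n : ℝ) + 1) - 2 * (((n : ℝ) + 1) * x)) - ((n : ℝ) + 1) * f (n + 1) - f 0) := by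
    rw [← Finset.mul_sum, tele f n]
    congr 2
    have : ∑ i ∈ Finset.range (n + 2), f i
        = ((n : ℝ) + 1) * (∑ i ∈ Finset.range (n + 2), bern (n + 1) i x)
          - 2 * ∑ i ∈ Finset.range (n + 2), (i : ℝ) * bern (n + 1) i x := by
      rw [Finset.mul_sum, Finset.mul_sum, ← Finset.sum_sub_distrib]
      exact Finset.sum_congr rfl fun i _ => by simp [hf]; ring
    rw [this, bern_sum0, bern_sum1]
    push_cast
    ring
  have h3 : ∑ i ∈ Finset.range (n + 1),
      (if i = n then lam * x ^ (n + 1) / ((n : ℝ) - 1) else 0)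
      = lam * x ^ (n + 1) / ((n : ℝ) - 1) := by
    rw [Finset.sum_ite_eq' (Finset.range (n + 1)) n]
    simp
  rw [h1, h2, h3]
  simp only [hf, hbtop, hbzero]
  push_cast
  field_simp
  ring
end

section
/- For every natural number n ≥ 2, every λ ∈ [−1,1] and every x ∈ [0,1], the first central moment of the λ-Bernstein operator satisfies β_n(x) := B_{n,λ}(t − x; x) = λ(1 − 2x + x^{n+1} − (1−x)^{n+1})/(n(n−1)). -/
open Finset Filter

/-! The λ-perturbation of the Bézier basis telescopes: `b̃_{n,i} = b_{n,i} + λ (a_i - a_{i+1})`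
with `a_i = (n - 2i + 1)/(n² - 1) · b_{n+1,i}` for `1 ≤ i ≤ n` and `a_0 = a_{n+1} = 0`.
The Bernstein part reproduces linear functions, so it contributes nothing to the first central
moment, and summation by parts turns the λ-part into `(λ/n) ∑ a_i`. The full sum
`∑_{i=0}^{n+1} (n - 2i + 1)/(n² - 1) · b_{n+1,i}` is `(1 - 2x)/(n - 1)`, and removing its two
end terms `(1 - x)^{n+1}/(n - 1)` and `-x^{n+1}/(n - 1)` gives the closed form. -/

theorem bern_eq_eval_bernsteinPolynomial (n i : ℕ) (x : ℝ) :
    bern n i x = (bernsteinPolynomial ℝ n i).eval x := by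
  simp [bern, bernsteinPolynomial]

theorem bern_zero_right (m : ℕ) (x : ℝ) : bern m 0 x = (1 - x) ^ m := by
  simp [bern]

theorem bern_self (m : ℕ) (x : ℝ) : bern m m x = x ^ m := by
  simp [bern]

theorem sum_bern (m : ℕ) (x : ℝ) : ∑ i ∈ range (m + 1), bern m i x = 1 := by
  simp only [bern_eq_eval_bernsteinPolynomial, ← Polynomial.eval_finsetSum,
    bernsteinPolynomial.sum, Polynomial.eval_one]

theorem sum_natCast_mul_bern (m : ℕ) (x : ℝ) :
    ∑ i ∈ range (m + 1), (i : ℝ) * bern m i x = m * x := by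
  simpa [bern_eq_eval_bernsteinPolynomial, Polynomial.eval_finsetSum, nsmul_eq_mul] using
    congrArg (Polynomial.eval x) (bernsteinPolynomial.sum_smul ℝ m)

theorem sum_affine_mul_bern (m : ℕ) (c d x : ℝ) :
    ∑ i ∈ range (m + 1), (c * i + d) * bern m i x = c * m * x + d := by
  simp only [add_mul, mul_assoc, sum_add_distrib, ← mul_sum, sum_natCast_mul_bern, sum_bern]
  ring

theorem sum_range_affine_mul_sub {R : Type*} [CommRing R] (a : ℕ → R) (c d : R) (N : ℕ) :
    ∑ i ∈ range N, (c * i + d) * (a i - a (i + 1)) =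
      c * ∑ i ∈ range N, a (i + 1) + d * (a 0 - a N) - c * N * a N := by
  induction N with
  | zero => simp
  | succ N ih =>
    rw [sum_range_succ, ih, sum_range_succ]
    push_cast
    ring

noncomputable def bezCorrection (n : ℕ) (x : ℝ) (i : ℕ) : ℝ :=
  if i = 0 ∨ n < i then 0 else ((n : ℝ) - 2 * i + 1) / ((n : ℝ) ^ 2 - 1) * bern (n + 1) i x

theorem bezCorrection_zero (n : ℕ) (x : ℝ) : bezCorrection n x 0 = 0 := by
  simp [bezCorrection]

theorem bezCorrection_of_lt {n i : ℕ} (x : ℝ) (h : n < i) : bezCorrection n x i = 0 := by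
  simp [bezCorrection, h]

theorem bezCorrection_of_pos_of_le {n i : ℕ} (x : ℝ) (h0 : 0 < i) (hn : i ≤ n) :
    bezCorrection n x i = ((n : ℝ) - 2 * i + 1) / ((n : ℝ) ^ 2 - 1) * bern (n + 1) i x := by
  simp [bezCorrection, h0.ne', hn.not_gt]

theorem bez_eq_bern_add_sub_bezCorrection {n i : ℕ} (hn : 2 ≤ n) (hi : i ≤ n) (lam x : ℝ) :
    bez n lam x i = bern n i x + lam * (bezCorrection n x i - bezCorrection n x (i + 1)) := by
  have hn' : (2 : ℝ) ≤ n := by exact_mod_cast hn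
  have hsq : (n : ℝ) ^ 2 - 1 ≠ 0 := by nlinarith
  have hn1 : (n : ℝ) + 1 ≠ 0 := by linarith
  rcases Nat.eq_zero_or_pos i with rfl | hi0
  · rw [bez, if_pos rfl, bezCorrection_zero, zero_add,
      bezCorrection_of_pos_of_le x one_pos (by omega)]
    field_simp
    push_cast
    ring
  rcases hi.eq_or_lt with rfl | hin
  · rw [bez, if_neg hi0.ne', if_pos rfl, bezCorrection_of_lt x (Nat.lt_succ_self i),
      bezCorrection_of_pos_of_le x hi0 le_rfl]
    field_simp
    ring
  · rw [bez, if_neg hi0.ne', if_neg hin.ne, bezCorrection_of_pos_of_le x hi0 hi,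
      bezCorrection_of_pos_of_le x i.succ_pos hin]
    push_cast
    ring

theorem sum_bezCorrection {n : ℕ} (hn : 2 ≤ n) (x : ℝ) :
    ∑ i ∈ range (n + 1), bezCorrection n x (i + 1) =
      (1 - 2 * x + x ^ (n + 1) - (1 - x) ^ (n + 1)) / ((n : ℝ) - 1) := by
  have hn' : (2 : ℝ) ≤ n := by exact_mod_cast hn
  have hn1 : (n : ℝ) - 1 ≠ 0 := by linarith
  set c : ℝ := -2 / ((n : ℝ) ^ 2 - 1)
  set d : ℝ := ((n : ℝ) + 1) / ((n : ℝ) ^ 2 - 1)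
  have interior : ∑ i ∈ range (n + 1), bezCorrection n x (i + 1) =
      ∑ i ∈ range n, (c * (i + 1 : ℕ) + d) * bern (n + 1) (i + 1) x := by
    rw [sum_range_succ, bezCorrection_of_lt x n.lt_succ_self, add_zero]
    refine sum_congr rfl fun i hi => ?_
    rw [bezCorrection_of_pos_of_le x i.succ_pos (mem_range.mp hi)]
    push_cast
    ring
  have full := sum_affine_mul_bern (n + 1) c d x
  rw [sum_range_succ, sum_range_succ', bern_zero_right, bern_self] at full
  rw [interior, eq_div_iff hn1]
  generalize ∑ i ∈ range n, (c * (i + 1 : ℕ) + d) * bern (n + 1) (i + 1) x = S at full ⊢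
  have hsq' : (n : ℝ) ^ 2 - 1 = ((n : ℝ) - 1) * ((n : ℝ) + 1) := by ring
  simp only [c, d, hsq'] at full
  field_simp at full
  push_cast at full
  refine mul_right_cancel₀ (by positivity : (n : ℝ) + 1 ≠ 0) ?_
  linear_combination full

theorem lB_first_central_moment_general (n : ℕ) (hn : 2 ≤ n) (lam : ℝ) (x : ℝ) :
    lB n lam (fun t => t - x) x =
      lam * (1 - 2 * x + x ^ (n + 1) - (1 - x) ^ (n + 1)) / ((n : ℝ) * ((n : ℝ) - 1)) := by
  have hn0 : (n : ℝ) ≠ 0 := by positivity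
  calc lB n lam (fun t => t - x) x
      = ∑ i ∈ range (n + 1), ((n : ℝ)⁻¹ * i + -x) * bern n i x + lam *
          ∑ i ∈ range (n + 1), ((n : ℝ)⁻¹ * i + -x) *
            (bezCorrection n x i - bezCorrection n x (i + 1)) := by
        rw [lB, mul_sum, ← sum_add_distrib]
        refine sum_congr rfl fun i hi => ?_
        rw [bez_eq_bern_add_sub_bezCorrection hn (Nat.lt_succ_iff.mp (mem_range.mp hi))]
        ring
    _ = lam * ((n : ℝ)⁻¹ * ∑ i ∈ range (n + 1), bezCorrection n x (i + 1)) := by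
        rw [sum_affine_mul_bern, sum_range_affine_mul_sub, bezCorrection_zero,
          bezCorrection_of_lt x n.lt_succ_self]
        field_simp
        ring
    _ = _ := by
        rw [sum_bezCorrection hn]
        field_simp

/-- first central moment `β_n(x) = B_{n,λ}(t - x; x)`. -/
theorem lB_first_central_moment (n : ℕ) (hn : 2 ≤ n) (lam : ℝ)
    (hlam : lam ∈ Set.Icc (-1 : ℝ) 1) (x : ℝ) (hx : x ∈ Set.Icc (0 : ℝ) 1) :
    lB n lam (fun t => t - x) x =
      lam * (1 - 2 * x + x ^ (n + 1) - (1 - x) ^ (n + 1)) / ((n : ℝ) * ((n : ℝ) - 1)) :=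
  lB_first_central_moment_general n hn lam x
end

section
/- Let f ∈ C¹[0,1] and λ ∈ [−1,1]. Then for every n ≥ 2 and every x ∈ [0,1], |B_{n,λ}(f;x) − f(x)| ≤ |β_n(x)| · |f′(x)| + 2 √(α_n(x)) · ω( f′, √(α_n(x)) ), where β_n(x) = B_{n,λ}(t−x;x), α_n(x) = B_{n,λ}((t−x)²;x), and ω(g,δ) = sup{ |g(t) − g(s)| : s,t ∈ [0,1], |t−s| ≤ δ } is the usual modulus of continuity. -/
open Finset Filter

/-- Usual modulus of continuity of `g` on `[0,1]`. -/
noncomputable def modCont (g : ℝ → ℝ) (δ : ℝ) : ℝ :=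
  sSup {y | ∃ s ∈ Set.Icc (0 : ℝ) 1, ∃ t ∈ Set.Icc (0 : ℝ) 1, |t - s| ≤ δ ∧ y = |g t - g s|}

/-! For `λ ∈ [-1, 1]` the λ-Bernstein operator is a positive linear functional reproducing
constants: each Bézier basis function is a nonnegative combination of the Bernstein basis of
degree `n + 1`, and the `λ`-perturbation telescopes in `∑ i, b̃_{n,i}`. For any such functional `L`
write `f t - f x = f' x * (t - x) + R t`. The mean value inequality together with the
subadditivity of `ω = ω(f', δ)` gives `|R t| ≤ (|t - x| + (t - x)² / δ) ω`, and with
`δ = √(L (t - x)²)` Cauchy–Schwarz gives `L |t - x| ≤ δ`, so `L |R| ≤ 2 δ ω`. -/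

open Set

section ModulusOfContinuity

variable {g : ℝ → ℝ}

lemma bddAbove_modCont_set (hg : ContinuousOn g (Icc 0 1)) (δ : ℝ) :
    BddAbove {y | ∃ s ∈ Icc (0 : ℝ) 1, ∃ t ∈ Icc (0 : ℝ) 1, |t - s| ≤ δ ∧ y = |g t - g s|} := by
  obtain ⟨M, hM⟩ := isCompact_Icc.exists_bound_of_continuousOn hg
  refine ⟨2 * M, ?_⟩
  rintro y ⟨s, hs, t, ht, -, rfl⟩
  have hs' := hM s hs
  have ht' := hM t ht
  rw [Real.norm_eq_abs] at hs' ht'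
  linarith [abs_sub (g t) (g s)]

lemma abs_sub_le_modCont (hg : ContinuousOn g (Icc 0 1)) {δ s t : ℝ} (hs : s ∈ Icc (0 : ℝ) 1)
    (ht : t ∈ Icc (0 : ℝ) 1) (hst : |t - s| ≤ δ) : |g t - g s| ≤ modCont g δ :=
  le_csSup (bddAbove_modCont_set hg δ) ⟨s, hs, t, ht, hst, rfl⟩

lemma modCont_nonneg (hg : ContinuousOn g (Icc 0 1)) {δ : ℝ} (hδ : 0 ≤ δ) :
    0 ≤ modCont g δ := by
  simpa using abs_sub_le_modCont hg (s := 0) (t := 0) (by simp) (by simp) (by simpa using hδ)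

lemma abs_sub_le_nat_mul_modCont (hg : ContinuousOn g (Icc 0 1)) {δ s x : ℝ} {m : ℕ}
    (hm : 0 < m) (hs : s ∈ Icc (0 : ℝ) 1) (hx : x ∈ Icc (0 : ℝ) 1) (hsx : |s - x| ≤ m * δ) :
    |g s - g x| ≤ m * modCont g δ := by
  have hmR : (0 : ℝ) < m := by exact_mod_cast hm
  set p : ℕ → ℝ := fun j => x + j / m * (s - x) with hp
  have hp_mem : ∀ j ≤ m, p j ∈ Icc (0 : ℝ) 1 := by
    intro j hj
    have hj0 : (0 : ℝ) ≤ j / m := by positivity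
    have hj1 : (j : ℝ) / m ≤ 1 := by rw [div_le_one hmR]; exact_mod_cast hj
    exact ⟨by nlinarith [hx.1, hs.1], by nlinarith [hx.2, hs.2]⟩
  have hp_step : ∀ j, |p (j + 1) - p j| ≤ δ := by
    intro j
    have : p (j + 1) - p j = (s - x) / m := by simp only [hp]; push_cast; ring
    rw [this, abs_div, abs_of_pos hmR, div_le_iff₀ hmR]
    linarith
  have htelescope : g s - g x = ∑ j ∈ Finset.range m, (g (p (j + 1)) - g (p j)) := by
    rw [Finset.sum_range_sub (fun j => g (p j))]
    simp [hp, hmR.ne']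
  calc |g s - g x| ≤ ∑ j ∈ Finset.range m, |g (p (j + 1)) - g (p j)| :=
        htelescope ▸ Finset.abs_sum_le_sum_abs _ _
    _ ≤ ∑ _j ∈ Finset.range m, modCont g δ := by
        refine Finset.sum_le_sum fun j hj => ?_
        rw [Finset.mem_range] at hj
        exact abs_sub_le_modCont hg (hp_mem j hj.le) (hp_mem (j + 1) hj) (hp_step j)
    _ = m * modCont g δ := by simp

lemma abs_sub_le_one_add_div_mul_modCont (hg : ContinuousOn g (Icc 0 1)) {δ s x : ℝ}
    (hδ : 0 < δ) (hs : s ∈ Icc (0 : ℝ) 1) (hx : x ∈ Icc (0 : ℝ) 1) :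
    |g s - g x| ≤ (1 + |s - x| / δ) * modCont g δ := by
  set c := |s - x| / δ
  have hc : 0 ≤ c := by positivity
  calc |g s - g x| ≤ (⌊c⌋₊ + 1 : ℕ) * modCont g δ := by
        refine abs_sub_le_nat_mul_modCont hg (Nat.succ_pos _) hs hx ?_
        have := (div_le_iff₀ hδ).1 (Nat.lt_floor_add_one c).le
        exact_mod_cast this
    _ ≤ (1 + c) * modCont g δ := by
        gcongr
        · exact modCont_nonneg hg hδ.le
        · push_cast; linarith [Nat.floor_le hc]

end ModulusOfContinuity

lemma abs_sub_sub_mul_le_modCont {f f' : ℝ → ℝ}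
    (hderiv : ∀ x ∈ Icc (0 : ℝ) 1, HasDerivAt f (f' x) x) (hf' : ContinuousOn f' (Icc 0 1))
    {δ x t : ℝ} (hδ : 0 < δ) (hx : x ∈ Icc (0 : ℝ) 1) (ht : t ∈ Icc (0 : ℝ) 1) :
    |f t - f x - f' x * (t - x)| ≤ (|t - x| + (t - x) ^ 2 / δ) * modCont f' δ := by
  have hsub : uIcc x t ⊆ Icc 0 1 := uIcc_subset_Icc hx ht
  have hbound : ∀ y ∈ uIcc x t, ‖f' y - f' x‖ ≤ (1 + |t - x| / δ) * modCont f' δ := by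
    intro y hy
    have hyx : |y - x| ≤ |t - x| := by
      rw [← Real.dist_eq, ← Real.dist_eq, dist_comm y, dist_comm t]
      exact Real.dist_le_of_mem_uIcc left_mem_uIcc hy
    calc ‖f' y - f' x‖ ≤ (1 + |y - x| / δ) * modCont f' δ :=
          abs_sub_le_one_add_div_mul_modCont hf' hδ (hsub hy) hx
      _ ≤ (1 + |t - x| / δ) * modCont f' δ := by
          gcongr
          exact modCont_nonneg hf' hδ.le
  have hmvt := (convex_uIcc x t).norm_image_sub_le_of_norm_hasDerivWithin_le
    (f := fun y => f y - f' x * y)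
    (fun y hy => ((hderiv y (hsub hy)).sub ((hasDerivAt_id y).const_mul (f' x))).hasDerivWithinAt
      |>.congr_deriv (by ring)) hbound left_mem_uIcc right_mem_uIcc
  calc |f t - f x - f' x * (t - x)| = ‖(f t - f' x * t) - (f x - f' x * x)‖ := by
        rw [Real.norm_eq_abs]; ring_nf
    _ ≤ (1 + |t - x| / δ) * modCont f' δ * |t - x| := hmvt
    _ = (|t - x| + (t - x) ^ 2 / δ) * modCont f' δ := by
        rw [← sq_abs (t - x)]; field_simp

section WeightedSum

variable {ι : Type*} {s : Finset ι} {w : ι → ℝ}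

lemma sum_abs_mul_le_sqrt_sum_sq_mul (hw : ∀ i ∈ s, 0 ≤ w i) (hw1 : ∑ i ∈ s, w i = 1)
    (a : ι → ℝ) : ∑ i ∈ s, |a i| * w i ≤ √(∑ i ∈ s, a i ^ 2 * w i) := by
  refine Real.le_sqrt_of_sq_le ?_
  simpa [hw1] using Finset.sum_sq_le_sum_mul_sum_of_sq_le_mul s
    (fun i hi => mul_nonneg (sq_nonneg (a i)) (hw i hi)) hw
    (fun i _ => (by rw [mul_pow, sq_abs]; ring : (|a i| * w i) ^ 2 = a i ^ 2 * w i * w i).le)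

variable {f f' : ℝ → ℝ} {t : ι → ℝ} {x : ℝ}

lemma sum_abs_sub_sub_mul_mul_le (hw : ∀ i ∈ s, 0 ≤ w i) (hw1 : ∑ i ∈ s, w i = 1)
    (ht : ∀ i ∈ s, t i ∈ Icc (0 : ℝ) 1)
    (hderiv : ∀ x ∈ Icc (0 : ℝ) 1, HasDerivAt f (f' x) x) (hf' : ContinuousOn f' (Icc 0 1))
    (hx : x ∈ Icc (0 : ℝ) 1) :
    ∑ i ∈ s, |f (t i) - f x - f' x * (t i - x)| * w i ≤
      2 * √(∑ i ∈ s, (t i - x) ^ 2 * w i) * modCont f' √(∑ i ∈ s, (t i - x) ^ 2 * w i) := by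
  set α := ∑ i ∈ s, (t i - x) ^ 2 * w i with hα
  have hα0 : 0 ≤ α := Finset.sum_nonneg fun i hi => mul_nonneg (sq_nonneg _) (hw i hi)
  set δ := √α
  rcases hα0.eq_or_lt with hα_zero | hα_pos
  · -- every node carrying weight sits at `x`, where the Taylor remainder vanishes
    have hterm := (Finset.sum_eq_zero_iff_of_nonneg
      fun i hi => mul_nonneg (sq_nonneg (t i - x)) (hw i hi)).1 hα_zero.symm
    rw [show δ = 0 by simp [δ, ← hα_zero], mul_zero, zero_mul]
    refine (Finset.sum_eq_zero fun i hi => ?_).le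
    rcases mul_eq_zero.1 (hterm i hi) with h | h
    · simp [sub_eq_zero.1 (pow_eq_zero_iff two_ne_zero |>.1 h)]
    · simp [h]
  have hδ : 0 < δ := Real.sqrt_pos.2 hα_pos
  have hω := modCont_nonneg hf' hδ.le
  calc ∑ i ∈ s, |f (t i) - f x - f' x * (t i - x)| * w i
      ≤ ∑ i ∈ s, (|t i - x| + (t i - x) ^ 2 / δ) * modCont f' δ * w i :=
        Finset.sum_le_sum fun i hi => mul_le_mul_of_nonneg_right
          (abs_sub_sub_mul_le_modCont hderiv hf' hδ hx (ht i hi)) (hw i hi)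
    _ = (∑ i ∈ s, |t i - x| * w i + α / δ) * modCont f' δ := by
        rw [hα, Finset.sum_div, ← Finset.sum_add_distrib, Finset.sum_mul]
        exact Finset.sum_congr rfl fun i _ => by ring
    _ ≤ (δ + α / δ) * modCont f' δ := by
        gcongr
        exact sum_abs_mul_le_sqrt_sum_sq_mul hw hw1 _
    _ = 2 * δ * modCont f' δ := by
        rw [← Real.sq_sqrt hα0]; field_simp; ring

theorem abs_sum_mul_sub_le (hw : ∀ i ∈ s, 0 ≤ w i) (hw1 : ∑ i ∈ s, w i = 1)
    (ht : ∀ i ∈ s, t i ∈ Icc (0 : ℝ) 1)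
    (hderiv : ∀ x ∈ Icc (0 : ℝ) 1, HasDerivAt f (f' x) x) (hf' : ContinuousOn f' (Icc 0 1))
    (hx : x ∈ Icc (0 : ℝ) 1) :
    |∑ i ∈ s, f (t i) * w i - f x| ≤ |∑ i ∈ s, (t i - x) * w i| * |f' x| +
      2 * √(∑ i ∈ s, (t i - x) ^ 2 * w i) * modCont f' √(∑ i ∈ s, (t i - x) ^ 2 * w i) := by
  have hsplit : ∑ i ∈ s, f (t i) * w i - f x = (∑ i ∈ s, (t i - x) * w i) * f' x +
      ∑ i ∈ s, (f (t i) - f x - f' x * (t i - x)) * w i := by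
    conv_lhs => rw [← mul_one (f x), ← hw1, Finset.mul_sum]
    rw [Finset.sum_mul, ← Finset.sum_sub_distrib, ← Finset.sum_add_distrib]
    exact Finset.sum_congr rfl fun i _ => by ring
  calc |∑ i ∈ s, f (t i) * w i - f x|
      ≤ |∑ i ∈ s, (t i - x) * w i| * |f' x| +
          ∑ i ∈ s, |f (t i) - f x - f' x * (t i - x)| * w i := by
        rw [hsplit, ← abs_mul]
        refine (abs_add_le _ _).trans (add_le_add le_rfl ?_)
        refine (Finset.abs_sum_le_sum_abs _ _).trans_eq (Finset.sum_congr rfl fun i hi => ?_)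
        rw [abs_mul, abs_of_nonneg (hw i hi)]
    _ ≤ _ := add_le_add le_rfl (sum_abs_sub_sub_mul_mul_le hw hw1 ht hderiv hf' hx)

end WeightedSum

section Bezier

variable {n i : ℕ} {lam x : ℝ}

lemma bern_nonneg (n i : ℕ) (hx : x ∈ Icc (0 : ℝ) 1) : 0 ≤ bern n i x := by
  have := hx.1
  have : 0 ≤ 1 - x := sub_nonneg.2 hx.2
  unfold bern
  positivity

lemma sum_range_bern (n : ℕ) (x : ℝ) : ∑ i ∈ Finset.range (n + 1), bern n i x = 1 := by
  simpa [bernsteinPolynomial, Polynomial.eval_finsetSum, bern] using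
    congrArg (Polynomial.eval x) (bernsteinPolynomial.sum ℝ n)

lemma add_one_mul_bern (hi : i ≤ n) (x : ℝ) :
    ((n : ℝ) + 1) * bern n i x =
      ((n : ℝ) + 1 - i) * bern (n + 1) i x + ((i : ℝ) + 1) * bern (n + 1) (i + 1) x := by
  have hleft : ((n + 1).choose i : ℝ) * ((n : ℝ) + 1 - i) = ((n : ℝ) + 1) * n.choose i := by
    have := congrArg (Nat.cast : ℕ → ℝ) (Nat.choose_mul_succ_eq n i)
    push_cast [Nat.cast_sub (by omega : i ≤ n + 1)] at this
    linarith
  have hright : ((n + 1).choose (i + 1) : ℝ) * ((i : ℝ) + 1) = ((n : ℝ) + 1) * n.choose i := by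
    have := congrArg (Nat.cast : ℕ → ℝ) (Nat.add_one_mul_choose_eq n i)
    push_cast at this
    linarith
  unfold bern
  rw [show n + 1 - i = n - i + 1 by omega, show n + 1 - (i + 1) = n - i by omega]
  linear_combination (-(x ^ i * (1 - x) ^ (n - i + 1))) * hleft
    - (x ^ (i + 1) * (1 - x) ^ (n - i)) * hright

lemma add_one_mul_bez_zero :
    ((n : ℝ) + 1) * bez n lam x 0 =
      ((n : ℝ) + 1) * bern (n + 1) 0 x + (1 - lam) * bern (n + 1) 1 x := by
  have := add_one_mul_bern (Nat.zero_le n) x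
  rw [bez, if_pos rfl]
  push_cast at this
  field_simp
  linear_combination this

lemma add_one_mul_bez_self (hn : n ≠ 0) :
    ((n : ℝ) + 1) * bez n lam x n =
      (1 - lam) * bern (n + 1) n x + ((n : ℝ) + 1) * bern (n + 1) (n + 1) x := by
  have := add_one_mul_bern (le_refl n) x
  rw [bez, if_neg hn, if_pos rfl]
  field_simp
  linear_combination this

lemma mul_bez_of_pos_of_lt (hi0 : 0 < i) (hin : i < n) :
    ((n : ℝ) ^ 2 - 1) * bez n lam x i =
      (((n : ℝ) - 1) * ((n : ℝ) + 1 - i) + lam * ((n : ℝ) - 2 * i + 1)) * bern (n + 1) i x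
        + (((n : ℝ) - 1) * ((i : ℝ) + 1) - lam * ((n : ℝ) - 2 * i - 1))
          * bern (n + 1) (i + 1) x := by
  have hn : (2 : ℝ) ≤ n := by exact_mod_cast (by omega : 2 ≤ n)
  have hn2 : (n : ℝ) ^ 2 - 1 ≠ 0 := by nlinarith
  have := add_one_mul_bern hin.le x
  simp only [bez, if_neg hi0.ne', if_neg hin.ne]
  field_simp
  linear_combination ((n : ℝ) - 1) * this

lemma bez_nonneg (hlam : lam ∈ Icc (-1 : ℝ) 1) (hx : x ∈ Icc (0 : ℝ) 1) (hi : i ≤ n) :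
    0 ≤ bez n lam x i := by
  obtain ⟨hl1, hl2⟩ := hlam
  have hb := fun k => bern_nonneg (n + 1) k hx
  rcases Nat.eq_zero_or_pos i with rfl | hi0
  · refine (mul_nonneg_iff_of_pos_left (by positivity : (0 : ℝ) < n + 1)).1 ?_
    rw [add_one_mul_bez_zero]
    have := hb 0; have := hb 1
    have : 0 ≤ 1 - lam := by linarith
    positivity
  rcases hi.eq_or_lt with rfl | hin
  · refine (mul_nonneg_iff_of_pos_left (by positivity : (0 : ℝ) < i + 1)).1 ?_
    rw [add_one_mul_bez_self hi0.ne']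
    have := hb i; have := hb (i + 1)
    have : 0 ≤ 1 - lam := by linarith
    positivity
  have hI : (1 : ℝ) ≤ i := by exact_mod_cast hi0
  have hIn : (i : ℝ) + 1 ≤ n := by exact_mod_cast hin
  refine (mul_nonneg_iff_of_pos_left (by nlinarith : (0 : ℝ) < (n : ℝ) ^ 2 - 1)).1 ?_
  rw [mul_bez_of_pos_of_lt hi0 hin]
  have hleft : 0 ≤ ((n : ℝ) - 1) * ((n : ℝ) + 1 - i) + lam * ((n : ℝ) - 2 * i + 1) := by
    nlinarith [mul_nonneg (by linarith : (0 : ℝ) ≤ 1 + lam) (by linarith : (0 : ℝ) ≤ 1 - lam)]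
  have hright : 0 ≤ ((n : ℝ) - 1) * ((i : ℝ) + 1) - lam * ((n : ℝ) - 2 * i - 1) := by
    nlinarith [mul_nonneg (by linarith : (0 : ℝ) ≤ 1 + lam) (by linarith : (0 : ℝ) ≤ 1 - lam)]
  exact add_nonneg (mul_nonneg hleft (hb i)) (mul_nonneg hright (hb (i + 1)))

/-- `b̃_{n,i} = b_{n,i} + λ (bezFlux n x i - bezFlux n x (i + 1))`, so the `λ`-part of the Bézier
basis telescopes away in `∑ i, b̃_{n,i}`. -/
noncomputable def bezFlux (n : ℕ) (x : ℝ) (j : ℕ) : ℝ :=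
  if j = 0 ∨ n < j then 0 else ((n : ℝ) - 2 * j + 1) / ((n : ℝ) ^ 2 - 1) * bern (n + 1) j x

lemma bez_eq_bern_add_bezFlux_sub (hn : 2 ≤ n) (hi : i ≤ n) :
    bez n lam x i = bern n i x + lam * (bezFlux n x i - bezFlux n x (i + 1)) := by
  have hn' : (2 : ℝ) ≤ n := by exact_mod_cast hn
  have hn1 : (n : ℝ) + 1 ≠ 0 := by positivity
  have hn2 : (n : ℝ) ^ 2 - 1 ≠ 0 := by nlinarith
  rcases Nat.eq_zero_or_pos i with rfl | hi0
  · rw [bez, if_pos rfl, bezFlux, bezFlux, if_pos (Or.inl rfl), if_neg (by omega)]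
    field_simp
    push_cast
    ring
  rcases hi.eq_or_lt with rfl | hin
  · rw [bez, if_neg hi0.ne', if_pos rfl, bezFlux, bezFlux, if_neg (by omega),
      if_pos (Or.inr (Nat.lt_succ_self i))]
    field_simp
    ring
  · rw [bez, if_neg hi0.ne', if_neg hin.ne, bezFlux, bezFlux, if_neg (by omega), if_neg (by omega)]
    push_cast
    ring

lemma sum_range_bez (hn : 2 ≤ n) (lam x : ℝ) :
    ∑ i ∈ Finset.range (n + 1), bez n lam x i = 1 := by
  rw [Finset.sum_congr rfl fun i hi =>
      bez_eq_bern_add_bezFlux_sub (lam := lam) (x := x) hn (Finset.mem_range_succ_iff.1 hi),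
    Finset.sum_add_distrib, sum_range_bern, ← Finset.mul_sum, Finset.sum_range_sub']
  simp [bezFlux]

end Bezier

/-- estimate for `f ∈ C¹[0,1]` via the modulus of continuity of `f'`, with
`β_n(x) = B_{n,λ}(t-x;x)` and `α_n(x) = B_{n,λ}((t-x)²;x)`. -/
theorem lB_C1_estimate (f f' : ℝ → ℝ)
    (hderiv : ∀ x ∈ Set.Icc (0 : ℝ) 1, HasDerivAt f (f' x) x)
    (hf' : ContinuousOn f' (Set.Icc 0 1))
    (lam : ℝ) (hlam : lam ∈ Set.Icc (-1 : ℝ) 1) (n : ℕ) (hn : 2 ≤ n)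
    (x : ℝ) (hx : x ∈ Set.Icc (0 : ℝ) 1) :
    |lB n lam f x - f x| ≤
      |lB n lam (fun t => t - x) x| * |f' x|
        + 2 * Real.sqrt (lB n lam (fun t => (t - x) ^ 2) x)
          * modCont f' (Real.sqrt (lB n lam (fun t => (t - x) ^ 2) x)) := by
  have hnodes : ∀ i ∈ Finset.range (n + 1), (i : ℝ) / n ∈ Icc (0 : ℝ) 1 := fun i hi =>
    ⟨by positivity, div_le_one_of_le₀ (by exact_mod_cast Finset.mem_range_succ_iff.1 hi)
      (Nat.cast_nonneg n)⟩
  exact abs_sum_mul_sub_le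
    (fun i hi => bez_nonneg hlam hx (Finset.mem_range_succ_iff.1 hi))
    (sum_range_bez hn lam x) hnodes hderiv hf' hx
end
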